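/- arXiv:1007.0998 — 2 statements merged into one kernel-verified Lean document; each statement's English description precedes it below -/
import Mathlib

section
/- Let (G, G', ι, P, r) be a b-bounded refinement of a locally finite simple graph G, let Γ be a nonempty family of paths in G all of whose consecutive vertices are adjacent, and let Γ' be a nonempty family of paths in G'. Suppose that for every γ ∈ Γ the refined path γ_r (obtained by replacing each edge v w of γ by the path P(v w)) belongs to Γ'. Then EL(Γ') ≤ 2(b+1)²·EL(Γ). -/
open scoped ENNReal NNReal

/-- A (vertex) path in a graph: consecutive vertices are adjacent or equal. -/
def IsPath {V : Type*} (G : SimpleGraph V) (γ : List V) : Prop :=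
  γ.Chain' (fun a b => G.Adj a b ∨ a = b)

/-- The area of a metric `m : V → ℝ≥0`, valued in `ℝ≥0∞`. -/
noncomputable def gArea {V : Type*} (m : V → ℝ≥0) : ℝ≥0∞ :=
  ∑' v, (m v : ℝ≥0∞) ^ 2

/-- A metric is admissible if its area is finite and nonzero. -/
def Admissible {V : Type*} (m : V → ℝ≥0) : Prop :=
  0 < gArea m ∧ gArea m < ⊤

/-- The `m`-length of a path, summing the weights of its vertices with multiplicity. -/
noncomputable def pLen {V : Type*} (m : V → ℝ≥0) (γ : List V) : ℝ≥0∞ :=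
  (γ.map fun v => (m v : ℝ≥0∞)).sum

/-- The `m`-length of a path family: the infimum of the lengths of its members. -/
noncomputable def famLen {V : Type*} (m : V → ℝ≥0) (Γ : Set (List V)) : ℝ≥0∞ :=
  ⨅ γ ∈ Γ, pLen m γ

/-- The extremal length of a path family. -/
noncomputable def extremalLength {V : Type*} (Γ : Set (List V)) : ℝ≥0∞ :=
  ⨆ (m : V → ℝ≥0) (_ : Admissible m), famLen m Γ ^ 2 / gArea m

/-- A refinement of a simple graph `G` by a simple graph `G'`: an injection `ι` of the
vertices, and for each edge `(a,b)` of `G` a finite path `ι a :: P a b ++ [ι b]` in `G'`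
whose interior vertex list `P a b` (the vertices *attached* to the edge) is disjoint from
`ι(V)`, with attached sets of distinct edges pairwise disjoint. -/
structure Refinement {V V' : Type*} (G : SimpleGraph V) (G' : SimpleGraph V') where
  ι : V → V'
  inj : Function.Injective ι
  P : V → V → List V'
  path_adj : ∀ a b, G.Adj a b → List.Chain' G'.Adj (ι a :: P a b ++ [ι b])
  path_nodup : ∀ a b, G.Adj a b → (ι a :: P a b ++ [ι b]).Nodup
  symm : ∀ a b, G.Adj a b → P b a = (P a b).reverse
  disj_range : ∀ a b, G.Adj a b → ∀ z ∈ P a b, z ∉ Set.range ι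
  disj_edges : ∀ a b c d, G.Adj a b → G.Adj c d → s(a, b) ≠ s(c, d) →
    ∀ z ∈ P a b, z ∉ P c d

/-- A refinement is `b`-bounded if every edge has at most `b` attached vertices. -/
def Refinement.IsBBounded {V V' : Type*} {G : SimpleGraph V} {G' : SimpleGraph V'}
    (R : Refinement G G') (b : ℕ) : Prop :=
  ∀ a c, G.Adj a c → (R.P a c).length ≤ b

/-- The refined path `γ_r` of a path `γ`, obtained by replacing each edge `v w` of `γ`
by the path `ι v :: P v w ++ [ι w]` in `G'`. -/
def Refinement.refinePath {V V' : Type*} {G : SimpleGraph V} {G' : SimpleGraph V'}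
    (R : Refinement G G') : List V → List V'
  | [] => []
  | [v] => [R.ι v]
  | v :: w :: rest => R.ι v :: (R.P v w ++ R.refinePath (w :: rest))

/-!
Pull a metric `m'` on `G'` back to `m v = m' (ι v) + √(b · t v)`, where `t v` is the
`m'`-area of the vertices attached to the edges at `v`. By Cauchy–Schwarz each attached path
`P v w` has `m'`-length at most `√(b · t v)`, so the refinement of a path is no `m'`-longer than
the path is `m`-long. Each vertex of `G'` is attached to at most one edge, hence counted at most
twice in `∑ t`, which gives `area m ≤ (2 + 4b) · area m' ≤ 2(b+1)² · area m'`.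
-/
section PathLength

variable {V : Type*}

@[simp]
lemma pLen_nil (m : V → ℝ≥0) : pLen m [] = 0 := rfl

@[simp]
lemma pLen_cons (m : V → ℝ≥0) (v : V) (l : List V) : pLen m (v :: l) = m v + pLen m l := by
  simp [pLen]

@[simp]
lemma pLen_append (m : V → ℝ≥0) (l₁ l₂ : List V) :
    pLen m (l₁ ++ l₂) = pLen m l₁ + pLen m l₂ := by
  simp [pLen]

lemma pLen_sq_le_length_mul (m : V → ℝ≥0) (l : List V) :
    pLen m l ^ 2 ≤ l.length * pLen (fun v => m v ^ 2) l := by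
  have h := sq_sum_le_card_mul_sum_sq (s := Finset.univ) (f := fun i : Fin l.length => m l[i.1])
  rw [Finset.card_univ, Fintype.card_fin] at h
  simp only [pLen, ← Fin.sum_univ_fun_getElem]
  exact_mod_cast h

lemma famLen_eq_zero_of_gArea_eq_zero {m : V → ℝ≥0} {Γ : Set (List V)} (hΓ : Γ.Nonempty)
    (hm : gArea m = 0) : famLen m Γ = 0 := by
  have hm0 : m = 0 := funext fun v => by simpa using ENNReal.tsum_eq_zero.mp hm v
  obtain ⟨γ, hγ⟩ := hΓ
  exact nonpos_iff_eq_zero.mp ((iInf₂_le γ hγ).trans_eq (by simp [pLen, hm0]))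

end PathLength

theorem extremalLength_le_mul_of_forall_exists {V V' : Type*} {Γ : Set (List V)}
    {Γ' : Set (List V')} (hΓ : Γ.Nonempty) {C : ℝ≥0∞} (hC : C ≠ ⊤)
    (h : ∀ m' : V' → ℝ≥0, Admissible m' →
      ∃ m : V → ℝ≥0, famLen m' Γ' ≤ famLen m Γ ∧ gArea m ≤ C * gArea m') :
    extremalLength Γ' ≤ C * extremalLength Γ := by
  refine iSup₂_le fun m' hm' => ?_
  obtain ⟨m, hlen, harea⟩ := h m' hm'
  rcases eq_or_ne (gArea m) 0 with h0 | h0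
  · rw [famLen_eq_zero_of_gArea_eq_zero hΓ h0, nonpos_iff_eq_zero] at hlen
    simp [hlen]
  have hm : Admissible m :=
    ⟨pos_iff_ne_zero.2 h0, harea.trans_lt (ENNReal.mul_lt_top hC.lt_top hm'.2)⟩
  rw [ENNReal.div_le_iff hm'.1.ne' hm'.2.ne]
  calc famLen m' Γ' ^ 2 ≤ famLen m Γ ^ 2 := by gcongr
    _ = famLen m Γ ^ 2 / gArea m * gArea m := (ENNReal.div_mul_cancel h0 hm.2.ne).symm
    _ ≤ extremalLength Γ * (C * gArea m') :=
      mul_le_mul' (le_iSup₂ (f := fun m (_ : Admissible m) => famLen m Γ ^ 2 / gArea m) m hm)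
        harea
    _ = C * extremalLength Γ * gArea m' := by ring

namespace Refinement

variable {V V' : Type*} {G : SimpleGraph V} {G' : SimpleGraph V'} (R : Refinement G G')

lemma eq_or_eq_swap_of_mem_P {a b c d : V} (hab : G.Adj a b) (hcd : G.Adj c d) {z : V'}
    (hz : z ∈ R.P a b) (hz' : z ∈ R.P c d) : (c, d) = (a, b) ∨ (c, d) = (b, a) := by
  by_cases h : s(a, b) = s(c, d)
  · rcases Sym2.eq_iff.mp h with ⟨rfl, rfl⟩ | ⟨rfl, rfl⟩ <;> simp
  · exact absurd hz' (R.disj_edges a b c d hab hcd h z hz)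

lemma encard_setOf_mem_P_le_two (z : V') :
    {q : V × V | G.Adj q.1 q.2 ∧ z ∈ R.P q.1 q.2}.encard ≤ 2 := by
  rcases Set.eq_empty_or_nonempty {q : V × V | G.Adj q.1 q.2 ∧ z ∈ R.P q.1 q.2}
    with h | ⟨⟨a, b⟩, hab, hz⟩
  · simp [h]
  calc _ ≤ ({(a, b), (b, a)} : Set (V × V)).encard :=
        Set.encard_le_encard fun _ hq => R.eq_or_eq_swap_of_mem_P hab hq.1 hz hq.2
    _ ≤ ({(b, a)} : Set (V × V)).encard + 1 := Set.encard_insert_le _ _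
    _ = 2 := by rw [Set.encard_singleton]; rfl

open Classical in
noncomputable def attachedArea (m' : V' → ℝ≥0) (v : V) : ℝ≥0∞ :=
  ∑' (w) (z), if G.Adj v w ∧ z ∈ R.P v w then (m' z : ℝ≥0∞) ^ 2 else 0

lemma tsum_attachedArea_le (m' : V' → ℝ≥0) :
    ∑' v, R.attachedArea m' v ≤ 2 * gArea m' := by
  simp only [attachedArea, gArea]
  rw [← ENNReal.tsum_prod (f := fun v w => ∑' z, _), ENNReal.tsum_comm,
    ← ENNReal.tsum_mul_left]
  refine ENNReal.tsum_le_tsum fun z => ?_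
  calc _ = ∑' _ : {q : V × V | G.Adj q.1 q.2 ∧ z ∈ R.P q.1 q.2}, (m' z : ℝ≥0∞) ^ 2 := by
        classical
        rw [tsum_subtype _ fun _ => (m' z : ℝ≥0∞) ^ 2]
        simp only [Set.indicator_apply, Set.mem_ofPred_eq]
    _ ≤ 2 * (m' z : ℝ≥0∞) ^ 2 := by
        rw [ENNReal.tsum_set_const]
        gcongr
        exact_mod_cast R.encard_setOf_mem_P_le_two z

lemma pLen_P_le_attachedArea (m' : V' → ℝ≥0) {v w : V} (h : G.Adj v w) :
    pLen (fun z => m' z ^ 2) (R.P v w) ≤ R.attachedArea m' v := by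
  classical
  have hnd : (R.P v w).Nodup := (R.path_nodup v w h).of_cons.of_append_left
  refine le_of_eq_of_le ?_ (ENNReal.le_tsum w)
  rw [pLen, ← List.sum_toFinset _ hnd, tsum_eq_sum (s := (R.P v w).toFinset)
    fun z hz => if_neg fun hz' => hz (List.mem_toFinset.2 hz'.2)]
  exact Finset.sum_congr rfl fun z hz => by simp_all

lemma pLen_P_sq_le_mul_attachedArea {b : ℕ} (hb : R.IsBBounded b) (m' : V' → ℝ≥0) {v w : V}
    (h : G.Adj v w) :
    pLen m' (R.P v w) ^ 2 ≤ b * R.attachedArea m' v :=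
  calc pLen m' (R.P v w) ^ 2 ≤ (R.P v w).length * pLen (fun z => m' z ^ 2) (R.P v w) :=
        pLen_sq_le_length_mul _ _
    _ ≤ b * R.attachedArea m' v := by
        gcongr
        · exact_mod_cast hb v w h
        · exact R.pLen_P_le_attachedArea m' h

lemma pLen_refinePath_le {m' : V' → ℝ≥0} {m : V → ℝ≥0} (hv : ∀ v, m' (R.ι v) ≤ m v)
    (he : ∀ v w, G.Adj v w → m' (R.ι v) + pLen m' (R.P v w) ≤ m v) :
    ∀ γ : List V, List.IsChain G.Adj γ → pLen m' (R.refinePath γ) ≤ pLen m γ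
  | [], _ => by simp [refinePath]
  | [v], _ => by simpa [refinePath] using hv v
  | v :: w :: γ, h => by
    obtain ⟨hvw, hγ⟩ := List.isChain_cons_cons.mp h
    calc pLen m' (R.refinePath (v :: w :: γ))
        = m' (R.ι v) + pLen m' (R.P v w) + pLen m' (R.refinePath (w :: γ)) := by
          simp [refinePath, add_assoc]
      _ ≤ m v + pLen m (w :: γ) := add_le_add (he v w hvw) (pLen_refinePath_le hv he _ hγ)
      _ = pLen m (v :: w :: γ) := (pLen_cons ..).symm

noncomputable def pullback (b : ℕ) (m' : V' → ℝ≥0) (v : V) : ℝ≥0 :=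
  m' (R.ι v) + NNReal.sqrt (b * (R.attachedArea m' v).toNNReal)

lemma gArea_pullback_le (b : ℕ) (m' : V' → ℝ≥0) :
    gArea (R.pullback b m') ≤ (2 + 4 * b) * gArea m' := by
  have hpt : ∀ v, (R.pullback b m' v : ℝ≥0∞) ^ 2
      ≤ 2 * (m' (R.ι v) : ℝ≥0∞) ^ 2 + 2 * b * R.attachedArea m' v := by
    intro v
    have hnn : R.pullback b m' v ^ 2
        ≤ 2 * m' (R.ι v) ^ 2 + 2 * b * (R.attachedArea m' v).toNNReal :=
      add_sq_le.trans_eq (by rw [NNReal.sq_sqrt]; ring)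
    calc (R.pullback b m' v : ℝ≥0∞) ^ 2
        ≤ 2 * (m' (R.ι v) : ℝ≥0∞) ^ 2 + 2 * b * (R.attachedArea m' v).toNNReal := by
          exact_mod_cast hnn
      _ ≤ _ := by gcongr; exact ENNReal.coe_toNNReal_le_self
  calc gArea (R.pullback b m')
      ≤ ∑' v, (2 * (m' (R.ι v) : ℝ≥0∞) ^ 2 + 2 * b * R.attachedArea m' v) :=
        ENNReal.tsum_le_tsum hpt
    _ = 2 * ∑' v, (m' (R.ι v) : ℝ≥0∞) ^ 2 + 2 * b * ∑' v, R.attachedArea m' v := by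
        rw [ENNReal.tsum_add, ENNReal.tsum_mul_left, ENNReal.tsum_mul_left]
    _ ≤ 2 * gArea m' + 2 * b * (2 * gArea m') := by
        gcongr
        · exact ENNReal.tsum_comp_le_tsum_of_injective R.inj _
        · exact R.tsum_attachedArea_le m'
    _ = (2 + 4 * b) * gArea m' := by ring

lemma pLen_refinePath_le_pullback {b : ℕ} (hb : R.IsBBounded b) {m' : V' → ℝ≥0}
    (hm' : gArea m' ≠ ⊤) {γ : List V} (hγ : List.IsChain G.Adj γ) :
    pLen m' (R.refinePath γ) ≤ pLen (R.pullback b m') γ := by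
  refine R.pLen_refinePath_le (m := R.pullback b m') (fun _ => le_self_add) (fun v w h => ?_)
    γ hγ
  have ht : R.attachedArea m' v ≠ ⊤ :=
    ((ENNReal.le_tsum v).trans (R.tsum_attachedArea_le m')).trans_lt
      (ENNReal.mul_lt_top ENNReal.ofNat_lt_top hm'.lt_top) |>.ne
  rw [pullback, ENNReal.coe_add]
  gcongr
  rw [← ENNReal.pow_le_pow_left_iff two_ne_zero, ← ENNReal.coe_pow, NNReal.sq_sqrt]
  push_cast
  rw [ENNReal.coe_toNNReal ht]
  exact R.pLen_P_sq_le_mul_attachedArea hb m' h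

end Refinement

theorem stmt_6_general {V V' : Type*} (G : SimpleGraph V) (G' : SimpleGraph V')
    (R : Refinement G G') (b : ℕ) (hb : R.IsBBounded b)
    (Γ : Set (List V)) (Γ' : Set (List V'))
    (hΓne : Γ.Nonempty)
    (hΓ : ∀ γ ∈ Γ, γ.Chain' G.Adj)
    (href : ∀ γ ∈ Γ, R.refinePath γ ∈ Γ') :
    extremalLength Γ' ≤ ((2 * (b + 1) ^ 2 : ℕ) : ℝ≥0∞) * extremalLength Γ := by
  refine extremalLength_le_mul_of_forall_exists hΓne (ENNReal.natCast_ne_top _)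
    fun m' hm' => ⟨R.pullback b m', ?_, ?_⟩
  · exact le_iInf₂ fun γ hγ =>
      (iInf₂_le _ (href γ hγ)).trans (R.pLen_refinePath_le_pullback hb hm'.2.ne (hΓ γ hγ))
  · calc gArea (R.pullback b m') ≤ (2 + 4 * b) * gArea m' := R.gArea_pullback_le b m'
      _ ≤ ((2 * (b + 1) ^ 2 : ℕ) : ℝ≥0∞) * gArea m' := by
        gcongr
        norm_cast
        nlinarith

/-- First half of the main theorem: if refined paths of members of `Γ` belong to `Γ'`,
then `EL(Γ') ≤ 2(b+1)²·EL(Γ)`. -/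
theorem stmt_6 {V V' : Type*} (G : SimpleGraph V) (G' : SimpleGraph V')
    (hlf : ∀ v : V, (G.neighborSet v).Finite)
    (R : Refinement G G') (b : ℕ) (hb : R.IsBBounded b)
    (Γ : Set (List V)) (Γ' : Set (List V'))
    (hΓne : Γ.Nonempty) (hΓ'ne : Γ'.Nonempty)
    (hΓ : ∀ γ ∈ Γ, γ.Chain' G.Adj) (hΓ' : ∀ γ ∈ Γ', IsPath G' γ)
    (href : ∀ γ ∈ Γ, R.refinePath γ ∈ Γ') :
    extremalLength Γ' ≤ ((2 * (b + 1) ^ 2 : ℕ) : ℝ≥0∞) * extremalLength Γ :=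
  stmt_6_general G G' R b hb Γ Γ' hΓne hΓ href
end

section
/- Let (G, G', ι, P, r) be a b-bounded refinement, let θ : V → [0,∞) be a metric on G with area(θ) = 1, and let t : E → V be an orientation assigning to each edge one of its endpoints (its tail) such that every vertex v ∈ V is the tail of at most d edges. Define μ : V' → [0,∞) by μ(ι(v)) = θ(v) for v ∈ V, μ(z) = θ(t(e)) for z ∈ r(e), and μ(z) = 0 for all other z ∈ V'. Then area(μ) = ∑_{z∈V'} μ(z)² ≤ 1 + d·b. -/
open scoped ENNReal NNReal

/-!
Every vertex of `G'` carrying mass is either some `ι v`, contributing `area(θ) = 1` in total, or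
attached to some edge `e`, where it carries `θ(t e)²`. An edge has at most `b` attached vertices,
and grouping the edges by their tails, each `θ(v)²` is counted for at most `d` edges, so the
attached vertices contribute at most `b · d · area(θ) = d·b`.
-/

namespace ENNReal

variable {α β : Type*}

theorem tsum_subtype_le_encard_mul {s : Set α} {f : α → ℝ≥0∞} {c : ℝ≥0∞}
    (hf : ∀ x ∈ s, f x ≤ c) : ∑' x : s, f x ≤ s.encard * c :=
  (ENNReal.tsum_le_tsum fun x : s => hf x x.2).trans_eq (tsum_set_const s c)

theorem tsum_comp_le_mul_tsum_of_encard_fiber_le {g : α → β} {d : ℕ}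
    (hg : ∀ y, (g ⁻¹' {y}).encard ≤ d) (f : β → ℝ≥0∞) :
    ∑' x, f (g x) ≤ d * ∑' y, f y :=
  calc ∑' x, f (g x) = ∑' y, ∑' x : g ⁻¹' {y}, f (g x) := (tsum_fiberwise _ g).symm
    _ ≤ ∑' y, (d : ℝ≥0∞) * f y := by
      refine ENNReal.tsum_le_tsum fun y => ?_
      refine (tsum_subtype_le_encard_mul fun x hx => (congrArg f hx).le).trans ?_
      gcongr
      exact_mod_cast hg y
    _ = d * ∑' y, f y := ENNReal.tsum_mul_left

theorem tsum_subtype_comp_le_mul_tsum_of_encard_fiber_le {s : Set α} {g : α → β} {d : ℕ}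
    (hg : ∀ y, (s ∩ g ⁻¹' {y}).encard ≤ d) (f : β → ℝ≥0∞) :
    ∑' x : s, f (g x) ≤ d * ∑' y, f y := by
  refine tsum_comp_le_mul_tsum_of_encard_fiber_le (fun y => ?_) f
  have hfiber : (fun x : s => g x) ⁻¹' {y} = Subtype.val ⁻¹' (g ⁻¹' {y}) := rfl
  rw [hfiber, ← Subtype.val_injective.encard_image, Subtype.image_preimage_coe]
  exact hg y

end ENNReal

namespace Refinement

variable {V V' : Type*} {G : SimpleGraph V} {G' : SimpleGraph V'} (R : Refinement G G')

def attached (e : Sym2 V) : Set V' :=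
  {z | ∃ a c, G.Adj a c ∧ s(a, c) = e ∧ z ∈ R.P a c}

theorem attached_mk {a c : V} (h : G.Adj a c) : R.attached s(a, c) = {z | z ∈ R.P a c} := by
  ext z
  refine ⟨?_, fun hz => ⟨a, c, h, rfl, hz⟩⟩
  rintro ⟨a', c', h', he, hz⟩
  rcases Sym2.eq_iff.mp he with ⟨rfl, rfl⟩ | ⟨rfl, rfl⟩
  · exact hz
  · rwa [Set.mem_ofPred_eq, R.symm _ _ h', List.mem_reverse]

theorem encard_attached_le {b : ℕ} (hb : R.IsBBounded b) {e : Sym2 V} (he : e ∈ G.edgeSet) :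
    (R.attached e).encard ≤ b := by
  classical
  induction e using Sym2.ind with
  | _ a c =>
    have h : G.Adj a c := he
    have hset : R.attached s(a, c) = ↑(R.P a c).toFinset := by
      rw [R.attached_mk h]
      ext z
      simp
    rw [hset, Set.encard_coe_eq_coe_finsetCard]
    exact_mod_cast (R.P a c).toFinset_card_le.trans (hb a c h)

theorem tsum_attached_le {b : ℕ} (hb : R.IsBBounded b) {θ : V → ℝ≥0} {μ : V' → ℝ≥0}
    {t : Sym2 V → V} (hμr : ∀ a c, G.Adj a c → ∀ z ∈ R.P a c, μ z = θ (t s(a, c)))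
    (e : G.edgeSet) : ∑' z : R.attached e, (μ z : ℝ≥0∞) ^ 2 ≤ b * (θ (t e) : ℝ≥0∞) ^ 2 := by
  refine (ENNReal.tsum_subtype_le_encard_mul (f := fun z => (μ z : ℝ≥0∞) ^ 2)
    (c := (θ (t e) : ℝ≥0∞) ^ 2) fun z hz => ?_).trans ?_
  · obtain ⟨a, c, h, hac, hz⟩ := hz
    rw [hμr a c h z hz, hac]
  · gcongr
    exact_mod_cast R.encard_attached_le hb e.2

theorem support_subset_range_union_attached {M : Type*} [Zero M] {f : V' → M}
    (hf : ∀ z, z ∉ Set.range R.ι → (∀ a c, G.Adj a c → z ∉ R.P a c) → f z = 0) :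
    Function.support f ⊆ Set.range R.ι ∪ ⋃ e ∈ G.edgeSet, R.attached e := by
  intro z hz
  by_contra hcon
  simp only [Set.mem_union, Set.mem_iUnion, not_or, not_exists] at hcon
  exact hz (hf z hcon.1 fun a c h hzP => hcon.2 s(a, c) h ⟨a, c, h, rfl, hzP⟩)

theorem gArea_le_add_tsum_attached {θ : V → ℝ≥0} {μ : V' → ℝ≥0}
    (hμι : ∀ v, μ (R.ι v) = θ v)
    (hμ0 : ∀ z : V', z ∉ Set.range R.ι → (∀ a c, G.Adj a c → z ∉ R.P a c) → μ z = 0) :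
    gArea μ ≤ gArea θ + ∑' e : G.edgeSet, ∑' z : R.attached e, (μ z : ℝ≥0∞) ^ 2 := by
  set f : V' → ℝ≥0∞ := fun z => (μ z : ℝ≥0∞) ^ 2
  have hsupp := R.support_subset_range_union_attached (f := f) fun z h₁ h₂ => by
    simp [f, hμ0 z h₁ h₂]
  calc gArea μ = ∑' z : ↥(Set.range R.ι ∪ ⋃ e ∈ G.edgeSet, R.attached e), f z :=
        (tsum_subtype_eq_of_support_subset hsupp).symm
    _ ≤ ∑' z : Set.range R.ι, f z + ∑' z : ↥(⋃ e ∈ G.edgeSet, R.attached e), f z :=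
        ENNReal.tsum_union_le f _ _
    _ ≤ gArea θ + ∑' e : G.edgeSet, ∑' z : R.attached e, f z := by
        rw [tsum_range f R.inj]
        exact add_le_add (by simp [f, hμι, gArea]) (ENNReal.tsum_biUnion_le_tsum f _ _)

end Refinement

theorem stmt_7_general {V V' : Type*} (G : SimpleGraph V) (G' : SimpleGraph V')
    (R : Refinement G G') (b : ℕ) (hb : R.IsBBounded b)
    (θ : V → ℝ≥0) (hθ : gArea θ = 1)
    (d : ℕ) (t : Sym2 V → V)
    (hout : ∀ v : V, ({e : Sym2 V | e ∈ G.edgeSet ∧ t e = v}).encard ≤ d)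
    (μ : V' → ℝ≥0)
    (hμι : ∀ v, μ (R.ι v) = θ v)
    (hμr : ∀ a c, G.Adj a c → ∀ z ∈ R.P a c, μ z = θ (t s(a, c)))
    (hμ0 : ∀ z : V', z ∉ Set.range R.ι → (∀ a c, G.Adj a c → z ∉ R.P a c) → μ z = 0) :
    gArea μ ≤ ((1 + d * b : ℕ) : ℝ≥0∞) := by
  have htails : ∑' e : G.edgeSet, (θ (t e) : ℝ≥0∞) ^ 2 ≤ d * gArea θ :=
    ENNReal.tsum_subtype_comp_le_mul_tsum_of_encard_fiber_le hout _
  calc gArea μ ≤ gArea θ + ∑' e : G.edgeSet, ∑' z : R.attached e, (μ z : ℝ≥0∞) ^ 2 :=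
        R.gArea_le_add_tsum_attached hμι hμ0
    _ ≤ gArea θ + b * (d * gArea θ) := by
        grw [ENNReal.tsum_le_tsum (R.tsum_attached_le hb hμr), ENNReal.tsum_mul_left, htails]
    _ = ((1 + d * b : ℕ) : ℝ≥0∞) := by
        rw [hθ]
        push_cast
        ring

/-- The area estimate for the pulled-back metric: if `θ` has unit area and `μ` is defined
from `θ` using an orientation of outdegree at most `d`, then `area(μ) ≤ 1 + d·b`. -/
theorem stmt_7 {V V' : Type*} (G : SimpleGraph V) (G' : SimpleGraph V')
    (R : Refinement G G') (b : ℕ) (hb : R.IsBBounded b)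
    (θ : V → ℝ≥0) (hθ : gArea θ = 1)
    (d : ℕ) (t : Sym2 V → V) (ht : ∀ e ∈ G.edgeSet, t e ∈ e)
    (hout : ∀ v : V, ({e : Sym2 V | e ∈ G.edgeSet ∧ t e = v}).encard ≤ d)
    (μ : V' → ℝ≥0)
    (hμι : ∀ v, μ (R.ι v) = θ v)
    (hμr : ∀ a c, G.Adj a c → ∀ z ∈ R.P a c, μ z = θ (t s(a, c)))
    (hμ0 : ∀ z : V', z ∉ Set.range R.ι → (∀ a c, G.Adj a c → z ∉ R.P a c) → μ z = 0) :
    gArea μ ≤ ((1 + d * b : ℕ) : ℝ≥0∞) :=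
  stmt_7_general G G' R b hb θ hθ d t hout μ hμι hμr hμ0
end
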